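/- If F_μ : B(X) → B(X) is a Ćirić contraction with constant k ∈ (0,1), then for every l ≥ 1 and all V, d(F_μ^l V, F_μ^l V_μ) ≤ k^l · max( ‖V − V_μ‖, ‖V − F_μ V‖, ‖V_μ − F_μ V_μ‖, (1/2^l)(‖V − F_μ V_μ‖ + ‖V_μ − F_μ V‖) ), where V_μ is the fixed point of F_μ. -/

import Mathlib

/-!
Along the orbit of `V`, a Ćirić contraction shrinks both the displacement `‖x - F x‖` and the
distance `‖x - Vμ‖` to the fixed point by a factor `k` per step: in each case the averaged
term of the Ćirić maximum is dominated by the other terms, by the triangle inequality and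
because `k < 1`. Hence `‖F^[l] V - Vμ‖ ≤ k ^ l * max ‖V - Vμ‖ ‖V - F V‖`, which is at most
the stated bound.
-/

open Function

/-- Ćirić contraction on a normed space. -/
def IsCiricN {E : Type*} [NormedAddCommGroup E] (F : E → E) (k : ℝ) : Prop :=
  ∀ V V' : E, ‖F V - F V'‖ ≤
    k * max ‖V - V'‖ (max ‖V - F V‖ (max ‖V' - F V'‖
      ((‖V - F V'‖ + ‖V' - F V‖) / 2)))

lemma le_mul_of_le_mul_max {k u v : ℝ} (hk0 : 0 ≤ k) (hk1 : k < 1) (hu : 0 ≤ u)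
    (h : v ≤ k * max u v) : v ≤ k * u := by
  rcases le_total v u with hvu | huv
  · rwa [max_eq_left hvu] at h
  · rw [max_eq_right huv] at h
    nlinarith [mul_nonneg hk0 hu]

lemma le_mul_of_le_mul_max_add_div_two {k m e : ℝ} (hk1 : k ≤ 1) (he : 0 ≤ e)
    (h : e ≤ k * max m ((m + e) / 2)) : e ≤ k * m := by
  rcases le_total ((m + e) / 2) m with hle | hlt
  · rwa [max_eq_left hle] at h
  · rw [max_eq_right hlt] at h
    nlinarith

namespace IsCiricN

variable {E : Type*} [NormedAddCommGroup E] {F : E → E} {k : ℝ}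

lemma norm_apply_sub_apply_apply_le (hF : IsCiricN F k) (hk0 : 0 ≤ k) (hk1 : k < 1) (x : E) :
    ‖F x - F (F x)‖ ≤ k * ‖x - F x‖ := by
  set u := ‖x - F x‖
  set v := ‖F x - F (F x)‖
  have htri : ‖x - F (F x)‖ ≤ u + v := norm_sub_le_norm_sub_add_norm_sub _ _ _
  have hmax : max ‖F x - x‖ (max v (max u ((‖F x - F x‖ + ‖x - F (F x)‖) / 2)))
      ≤ max u v := by
    rw [norm_sub_rev, sub_self, norm_zero, zero_add]
    refine max_le (le_max_left _ _) (max_le (le_max_right _ _) (max_le (le_max_left _ _) ?_))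
    rcases le_total u v with huv | hvu
    · exact le_max_of_le_right (by linarith)
    · exact le_max_of_le_left (by linarith)
  refine le_mul_of_le_mul_max hk0 hk1 (norm_nonneg _) ?_
  calc v = ‖F (F x) - F x‖ := norm_sub_rev _ _
    _ ≤ _ := hF (F x) x
    _ ≤ k * max u v := mul_le_mul_of_nonneg_left hmax hk0

lemma norm_iterate_sub_iterate_succ_le (hF : IsCiricN F k) (hk0 : 0 ≤ k) (hk1 : k < 1)
    (x : E) (n : ℕ) : ‖F^[n] x - F^[n + 1] x‖ ≤ k ^ n * ‖x - F x‖ := by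
  induction n with
  | zero => simp
  | succ n ih =>
    rw [iterate_succ_apply' F (n + 1), iterate_succ_apply']
    calc ‖F (F^[n] x) - F (F (F^[n] x))‖ ≤ k * ‖F^[n] x - F (F^[n] x)‖ :=
          hF.norm_apply_sub_apply_apply_le hk0 hk1 _
      _ ≤ k * (k ^ n * ‖x - F x‖) := by
          rw [← iterate_succ_apply' F n]
          exact mul_le_mul_of_nonneg_left ih hk0
      _ = k ^ (n + 1) * ‖x - F x‖ := by ring

lemma norm_apply_sub_fixedPt_le (hF : IsCiricN F k) (hk0 : 0 ≤ k) (hk1 : k ≤ 1) {p : E}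
    (hp : IsFixedPt F p) (x : E) : ‖F x - p‖ ≤ k * max ‖x - p‖ ‖x - F x‖ := by
  set e := ‖F x - p‖
  have hmax : max ‖x - p‖ (max ‖x - F x‖ (max ‖p - F p‖ ((‖x - F p‖ + ‖p - F x‖) / 2)))
      ≤ max (max ‖x - p‖ ‖x - F x‖) ((max ‖x - p‖ ‖x - F x‖ + e) / 2) := by
    rw [hp.eq, sub_self, norm_zero, norm_sub_rev p]
    refine max_le (le_max_of_le_left (le_max_left _ _))
      (max_le (le_max_of_le_left (le_max_right _ _)) (max_le ?_ ?_))
    · exact le_max_of_le_left (le_max_of_le_left (norm_nonneg _))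
    · exact le_max_of_le_right (by gcongr; exact le_max_left _ _)
  refine le_mul_of_le_mul_max_add_div_two hk1 (norm_nonneg _) ?_
  calc e = ‖F x - F p‖ := by rw [hp.eq]
    _ ≤ _ := hF x p
    _ ≤ _ := mul_le_mul_of_nonneg_left hmax hk0

lemma norm_iterate_sub_fixedPt_le (hF : IsCiricN F k) (hk0 : 0 ≤ k) (hk1 : k < 1) {p : E}
    (hp : IsFixedPt F p) (x : E) (n : ℕ) :
    ‖F^[n] x - p‖ ≤ k ^ n * max ‖x - p‖ ‖x - F x‖ := by
  induction n with
  | zero => simp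
  | succ n ih =>
    have hdisp : ‖F^[n] x - F (F^[n] x)‖ ≤ k ^ n * max ‖x - p‖ ‖x - F x‖ := by
      rw [← iterate_succ_apply' F n]
      exact (hF.norm_iterate_sub_iterate_succ_le hk0 hk1 x n).trans
        (mul_le_mul_of_nonneg_left (le_max_right _ _) (pow_nonneg hk0 n))
    rw [iterate_succ_apply']
    calc ‖F (F^[n] x) - p‖ ≤ k * max ‖F^[n] x - p‖ ‖F^[n] x - F (F^[n] x)‖ :=
          hF.norm_apply_sub_fixedPt_le hk0 hk1.le hp _
      _ ≤ k * (k ^ n * max ‖x - p‖ ‖x - F x‖) :=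
          mul_le_mul_of_nonneg_left (max_le ih hdisp) hk0
      _ = k ^ (n + 1) * max ‖x - p‖ ‖x - F x‖ := by ring

end IsCiricN

theorem stmt7_general {E : Type*} [NormedAddCommGroup E]
    (F : E → E) (k : ℝ) (hk : k ∈ Set.Ioo (0:ℝ) 1) (hF : IsCiricN F k)
    (Vμ : E) (hfix : F Vμ = Vμ) :
    ∀ l : ℕ, 1 ≤ l → ∀ V : E,
      ‖F^[l] V - F^[l] Vμ‖ ≤
        k ^ l * max ‖V - Vμ‖ (max ‖V - F V‖ (max ‖Vμ - F Vμ‖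
          ((1 / 2 ^ l) * (‖V - F Vμ‖ + ‖Vμ - F V‖)))) := by
  intro l _ V
  rw [iterate_fixed hfix l]
  exact (hF.norm_iterate_sub_fixedPt_le hk.1.le hk.2 hfix V l).trans
    (mul_le_mul_of_nonneg_left (max_le_max le_rfl (le_max_left _ _)) (pow_nonneg hk.1.le l))

theorem stmt7 {E : Type*} [NormedAddCommGroup E] [CompleteSpace E]
    (F : E → E) (k : ℝ) (hk : k ∈ Set.Ioo (0:ℝ) 1) (hF : IsCiricN F k)
    (Vμ : E) (hfix : F Vμ = Vμ) :
    ∀ l : ℕ, 1 ≤ l → ∀ V : E,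
      ‖F^[l] V - F^[l] Vμ‖ ≤
        k ^ l * max ‖V - Vμ‖ (max ‖V - F V‖ (max ‖Vμ - F Vμ‖
          ((1 / 2 ^ l) * (‖V - F Vμ‖ + ‖Vμ - F V‖)))) :=
  stmt7_general F k hk hF Vμ hfix
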